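/- arXiv:1608.02753 — 2 statements merged into one kernel-verified Lean document; each statement's English description precedes it below -/
import Mathlib

section
/- For every n ≥ 1 one has ℓ_n = L_{n−1}(μ_n) ≥ L_0(Σ_{i=1}^n μ_i), and consequently ℓ_n > L_0(μ) for every n ≥ 1. -/
open Filter

/-- The recursively defined overflow Laplace–Stieltjes transforms:
`ovLST L0 ms 0 = L0` and
`ovLST L0 ms n s = L_{n-1}(μ_n + s) / (1 - L_{n-1}(s) + L_{n-1}(μ_n + s))`. -/
noncomputable def ovLST (L0 : ℝ → ℝ) (ms : ℕ → ℝ) : ℕ → ℝ → ℝ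
  | 0 => L0
  | n + 1 => fun s =>
      ovLST L0 ms n (ms (n + 1) + s) /
        (1 - ovLST L0 ms n s + ovLST L0 ms n (ms (n + 1) + s))

/-- The blocking probability of the first `n` servers: `p_n = ∏_{i=1}^n L_{i-1}(μ_i)`. -/
noncomputable def blockP (L0 : ℝ → ℝ) (ms : ℕ → ℝ) (n : ℕ) : ℝ :=
  ∏ i ∈ Finset.Icc 1 n, ovLST L0 ms (i - 1) (ms i)

lemma icc_sum_eq (ms : ℕ → ℝ) :
    ∀ k, ∑ i ∈ Finset.Icc 1 (k + 1), ms i = ∑ i ∈ Finset.range (k + 1), ms (i + 1) := by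
  intro k
  induction k with
  | zero => simp
  | succ j ihj =>
    rw [Finset.sum_Icc_succ_top (by omega), ihj, Finset.sum_range_succ, Finset.sum_range_succ, Finset.sum_range_succ]

lemma ovLST_key
    (ms : ℕ → ℝ) (hms : ∀ n, 1 ≤ n → 0 < ms n)
    (L0 : ℝ → ℝ) (hL00 : L0 0 = 1)
    (hL0pos : ∀ s, 0 ≤ s → 0 < L0 s)
    (hL0anti : StrictAntiOn L0 (Set.Ici 0)) :
    ∀ n, (∀ s, 0 ≤ s → 0 < ovLST L0 ms n s) ∧ ovLST L0 ms n 0 = 1 ∧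
      StrictAntiOn (ovLST L0 ms n) (Set.Ici 0) ∧
      ∀ s, 0 ≤ s → L0 (s + ∑ i ∈ Finset.Icc 1 n, ms i) ≤ ovLST L0 ms n s := by
  intro n
  induction n with
  | zero =>
    refine ⟨hL0pos, hL00, hL0anti, fun s hs => ?_⟩
    simp [ovLST]
  | succ n ih =>
    obtain ⟨hpos, h0, hanti, hle⟩ := ih
    set f := ovLST L0 ms n with hf
    have hm : 0 < ms (n + 1) := hms (n + 1) (by omega)
    -- f s ≤ 1 for s ≥ 0
    have hle1 : ∀ s, 0 ≤ s → f s ≤ 1 := by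
      intro s hs
      rcases eq_or_lt_of_le hs with h | h
      · rw [← h, h0]
      · rw [← h0]
        exact (hanti (by simp) (le_of_lt h) h).le
    -- strict: f s < 1 for s > 0
    have hlt1 : ∀ s, 0 < s → f s < 1 := by
      intro s hs
      rw [← h0]; exact hanti (by simp) hs.le hs
    -- denominator facts
    have hDpos : ∀ s, 0 ≤ s → 0 < 1 - f s + f (ms (n + 1) + s) := by
      intro s hs
      have := hle1 s hs
      have := hpos (ms (n + 1) + s) (by linarith)
      linarith
    have hDle1 : ∀ s, 0 ≤ s → 1 - f s + f (ms (n + 1) + s) ≤ 1 := by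
      intro s hs
      have : f (ms (n + 1) + s) < f s :=
        hanti (by simp [hs]) (by simp; linarith) (by linarith)
      linarith
    have hov : ∀ s, ovLST L0 ms (n + 1) s =
        f (ms (n + 1) + s) / (1 - f s + f (ms (n + 1) + s)) := fun s => rfl
    have hposN : ∀ s, 0 ≤ s → 0 < f (ms (n + 1) + s) := by
      intro s hs; exact hpos _ (by linarith)
    refine ⟨?_, ?_, ?_, ?_⟩
    · intro s hs
      rw [hov]
      exact div_pos (hposN s hs) (hDpos s hs)
    · rw [hov, h0]
      have h := (hposN 0 le_rfl).ne'
      rw [add_zero] at h ⊢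
      simp [div_self h]
    · intro s hs t ht hst
      simp only [Set.mem_Ici] at hs ht
      rw [hov, hov]
      rw [div_lt_div_iff₀ (hDpos t ht) (hDpos s hs)]
      have hNs := hposN s hs
      have hNt := hposN t ht
      have h1 : f (ms (n + 1) + t) < f (ms (n + 1) + s) :=
        hanti (by simp; linarith) (by simp; linarith) (by linarith)
      have h2 : f t < f s := hanti (by simp [hs]) (by simp [ht]) hst
      have h3 : f t < 1 := hlt1 t (lt_of_le_of_lt hs hst)
      nlinarith
    · intro s hs
      rw [hov]
      have hN := hposN s hs
      have key : f (ms (n + 1) + s) ≤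
          f (ms (n + 1) + s) / (1 - f s + f (ms (n + 1) + s)) := by
        rw [le_div_iff₀ (hDpos s hs)]
        nlinarith [hDle1 s hs]
      refine le_trans ?_ key
      have := hle (ms (n + 1) + s) (by linarith)
      have harg : s + ∑ i ∈ Finset.Icc 1 (n + 1), ms i
          = ms (n + 1) + s + ∑ i ∈ Finset.Icc 1 n, ms i := by
        rw [Finset.sum_Icc_succ_top (by omega)]
        ring
      rw [harg]
      exact this

theorem stmt_6
    (μ : ℝ) (hμ : 0 < μ) (ms : ℕ → ℝ)
    (hms : ∀ n, 1 ≤ n → 0 < ms n)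
    (hsum : HasSum (fun n => ms (n + 1)) μ)
    (L0 : ℝ → ℝ) (hL00 : L0 0 = 1)
    (hL0pos : ∀ s, 0 ≤ s → 0 < L0 s)
    (hL0anti : StrictAntiOn L0 (Set.Ici 0))
    (hL0lim : Tendsto L0 atTop (nhds 0))
    :
    ∀ n, 1 ≤ n →
      L0 (∑ i ∈ Finset.Icc 1 n, ms i) ≤ ovLST L0 ms (n - 1) (ms n) ∧
      L0 μ < ovLST L0 ms (n - 1) (ms n) := by
  intro n hn
  obtain ⟨k, rfl⟩ : ∃ k, n = k + 1 := ⟨n - 1, (Nat.succ_pred_eq_of_pos hn).symm⟩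
  obtain ⟨hpos, h0, hanti, hle⟩ := ovLST_key ms hms L0 hL00 hL0pos hL0anti k
  have hm : 0 < ms (k + 1) := hms (k + 1) (by omega)
  have hmain : L0 (∑ i ∈ Finset.Icc 1 (k + 1), ms i) ≤ ovLST L0 ms k (ms (k + 1)) := by
    have := hle (ms (k + 1)) hm.le
    have harg : ∑ i ∈ Finset.Icc 1 (k + 1), ms i
        = ms (k + 1) + ∑ i ∈ Finset.Icc 1 k, ms i := by
      rw [Finset.sum_Icc_succ_top (by omega)]; ring
    rw [harg]; linarith [this]
  have hsimp : (k + 1) - 1 = k := by omega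
  rw [hsimp]
  refine ⟨hmain, lt_of_lt_of_le ?_ hmain⟩
  -- partial sum < μ
  have hsum_eq : ∑ i ∈ Finset.Icc 1 (k + 1), ms i = ∑ i ∈ Finset.range (k + 1), ms (i + 1) := by
    exact icc_sum_eq ms k
  have hnonneg : ∀ i, 0 ≤ ms (i + 1) := fun i => (hms (i + 1) (by omega)).le
  have h1 : ∑ i ∈ Finset.range (k + 2), ms (i + 1) ≤ μ :=
    sum_le_hasSum _ (fun i _ => hnonneg i) hsum
  have h2 : ∑ i ∈ Finset.range (k + 1), ms (i + 1) < ∑ i ∈ Finset.range (k + 2), ms (i + 1) := by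
    rw [Finset.sum_range_succ (n := k + 1)]
    have := hms (k + 2) (by omega)
    linarith
  have hlt : ∑ i ∈ Finset.Icc 1 (k + 1), ms i < μ := by rw [hsum_eq]; linarith
  have hsumnn : 0 ≤ ∑ i ∈ Finset.Icc 1 (k + 1), ms i := by
    rw [hsum_eq]
    exact Finset.sum_nonneg fun i _ => hnonneg i
  exact hL0anti (by simp [hsumnn]) (by simp [hμ.le]) hlt
end

section
/- Assume in addition that L_0 is differentiable on [0,∞) with L_0'(0) = −1/λ for some λ > 0, and that each L_k (k ≥ 0) is convex on [0,∞) (as holds for Laplace–Stieltjes transforms). If μ_n / p_n → 0 as n → ∞, then ℓ_n → 1. -/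
open Filter

/-!
Every `L_n` is normalised by `L_n(0) = 1`, and one step of the recursion divides the slope at `0`
by `ℓ_{n+1} = L_n(μ_{n+1})`, so `L_n'(0) = -1/(λ p_n)`. The tangent line of the convex function
`L_n` at `0` then gives `1 ≥ ℓ_{n+1} ≥ 1 - μ_{n+1}/(λ p_n) ≥ 1 - μ_{n+1}/(λ p_{n+1})`, and the
right-hand side tends to `1`.
-/

open Set

noncomputable def overflowStep (f : ℝ → ℝ) (m : ℝ) (s : ℝ) : ℝ :=
  f (m + s) / (1 - f s + f (m + s))

lemma ovLST_succ (L0 : ℝ → ℝ) (ms : ℕ → ℝ) (n : ℕ) :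
    ovLST L0 ms (n + 1) = overflowStep (ovLST L0 ms n) (ms (n + 1)) :=
  rfl

lemma blockP_succ (L0 : ℝ → ℝ) (ms : ℕ → ℝ) (n : ℕ) :
    blockP L0 ms (n + 1) = blockP L0 ms n * ovLST L0 ms n (ms (n + 1)) := by
  rw [blockP, Finset.prod_Icc_succ_top (Nat.le_add_left 1 n), blockP, Nat.add_sub_cancel]

structure IsLSTLike (f : ℝ → ℝ) : Prop where
  map_zero : f 0 = 1
  pos : ∀ s, 0 ≤ s → 0 < f s
  antitoneOn : AntitoneOn f (Ici 0)

lemma IsLSTLike.le_one {f : ℝ → ℝ} (hf : IsLSTLike f) {s : ℝ} (hs : 0 ≤ s) : f s ≤ 1 :=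
  hf.map_zero ▸ hf.antitoneOn self_mem_Ici hs hs

section OverflowStep

variable {f : ℝ → ℝ} {m : ℝ}

lemma IsLSTLike.overflowStep_denom_pos (hf : IsLSTLike f) (hm : 0 ≤ m) {s : ℝ} (hs : 0 ≤ s) :
    0 < 1 - f s + f (m + s) := by
  linarith [hf.le_one hs, hf.pos (m + s) (add_nonneg hm hs)]

lemma IsLSTLike.isLSTLike_overflowStep (hf : IsLSTLike f) (hm : 0 ≤ m) :
    IsLSTLike (overflowStep f m) where
  map_zero := by
    rw [overflowStep, add_zero, hf.map_zero, sub_self, zero_add,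
      div_self (hf.pos m hm).ne']
  pos s hs := div_pos (hf.pos _ (add_nonneg hm hs)) (hf.overflowStep_denom_pos hm hs)
  antitoneOn a ha b hb hab := by
    rw [mem_Ici] at ha hb
    rw [overflowStep, overflowStep,
      div_le_div_iff₀ (hf.overflowStep_denom_pos hm hb) (hf.overflowStep_denom_pos hm ha)]
    have hfb : f b ≤ f a := hf.antitoneOn ha hb hab
    have hfmb : f (m + b) ≤ f (m + a) :=
      hf.antitoneOn (add_nonneg hm ha) (add_nonneg hm hb) (by linarith)
    have : f (m + b) * (1 - f a) ≤ f (m + a) * (1 - f b) :=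
      mul_le_mul hfmb (by linarith) (by linarith [hf.le_one ha]) (hf.pos _ (by linarith)).le
    linarith

lemma IsLSTLike.differentiableOn_overflowStep (hf : IsLSTLike f) (hm : 0 ≤ m)
    (hfd : DifferentiableOn ℝ f (Ici 0)) :
    DifferentiableOn ℝ (overflowStep f m) (Ici 0) := by
  have hshift : DifferentiableOn ℝ (fun s => f (m + s)) (Ici 0) :=
    hfd.comp (differentiable_id.const_add m).differentiableOn
      fun s hs => add_nonneg hm (mem_Ici.mp hs)
  exact hshift.div (((differentiableOn_const 1).sub hfd).add hshift)
    fun s hs => (hf.overflowStep_denom_pos hm hs).ne'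

lemma IsLSTLike.hasDerivWithinAt_overflowStep_zero (hf : IsLSTLike f) (hm : 0 ≤ m)
    (hfd : DifferentiableOn ℝ f (Ici 0)) {a : ℝ} (ha : HasDerivWithinAt f a (Ici 0) 0) :
    HasDerivWithinAt (overflowStep f m) (a / f m) (Ici 0) 0 := by
  obtain ⟨b, hb⟩ : ∃ b, HasDerivWithinAt f b (Ici 0) m := ⟨_, (hfd m hm).hasDerivWithinAt⟩
  have hmaps : MapsTo (m + ·) (Ici (0 : ℝ)) (Ici 0) := fun s hs => add_nonneg hm hs
  have hshift : HasDerivWithinAt (fun s => f (m + s)) b (Ici 0) 0 :=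
    (hb.comp_of_eq 0 ((hasDerivWithinAt_id 0 _).const_add m) hmaps (add_zero m).symm).congr_deriv
      (mul_one b)
  have hden : HasDerivWithinAt (fun s => 1 - f s + f (m + s)) (-a + b) (Ici 0) 0 :=
    (ha.const_sub 1).fun_add hshift
  refine (hshift.fun_div hden (hf.overflowStep_denom_pos hm le_rfl).ne').congr_deriv ?_
  have hfm : f m ≠ 0 := (hf.pos m hm).ne'
  rw [add_zero, hf.map_zero, sub_self, zero_add]
  field_simp
  ring

end OverflowStep

section Recursion

variable {L0 : ℝ → ℝ} {ms : ℕ → ℝ}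

lemma isLSTLike_ovLST (hL0 : IsLSTLike L0) (hms : ∀ n, 0 ≤ ms (n + 1)) (n : ℕ) :
    IsLSTLike (ovLST L0 ms n) := by
  induction n with
  | zero => exact hL0
  | succ n ih => rw [ovLST_succ]; exact ih.isLSTLike_overflowStep (hms n)

lemma differentiableOn_ovLST (hL0 : IsLSTLike L0) (hms : ∀ n, 0 ≤ ms (n + 1))
    (hd : DifferentiableOn ℝ L0 (Ici 0)) (n : ℕ) :
    DifferentiableOn ℝ (ovLST L0 ms n) (Ici 0) := by
  induction n with
  | zero => exact hd
  | succ n ih =>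
    rw [ovLST_succ]
    exact (isLSTLike_ovLST hL0 hms n).differentiableOn_overflowStep (hms n) ih

lemma blockP_pos (hL0 : IsLSTLike L0) (hms : ∀ n, 0 ≤ ms (n + 1)) (n : ℕ) :
    0 < blockP L0 ms n := by
  induction n with
  | zero => simp [blockP]
  | succ n ih =>
    rw [blockP_succ]
    exact mul_pos ih ((isLSTLike_ovLST hL0 hms n).pos _ (hms n))

lemma blockP_succ_le (hL0 : IsLSTLike L0) (hms : ∀ n, 0 ≤ ms (n + 1)) (n : ℕ) :
    blockP L0 ms (n + 1) ≤ blockP L0 ms n := by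
  rw [blockP_succ]
  exact mul_le_of_le_one_right (blockP_pos hL0 hms n).le
    ((isLSTLike_ovLST hL0 hms n).le_one (hms n))

lemma hasDerivWithinAt_ovLST_zero (hL0 : IsLSTLike L0) (hms : ∀ n, 0 ≤ ms (n + 1))
    (hd : DifferentiableOn ℝ L0 (Ici 0)) {a : ℝ} (ha : HasDerivWithinAt L0 a (Ici 0) 0)
    (n : ℕ) : HasDerivWithinAt (ovLST L0 ms n) (a / blockP L0 ms n) (Ici 0) 0 := by
  induction n with
  | zero => simpa [blockP, ovLST] using ha
  | succ n ih =>
    rw [ovLST_succ, blockP_succ, ← div_div]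
    exact (isLSTLike_ovLST hL0 hms n).hasDerivWithinAt_overflowStep_zero (hms n)
      (differentiableOn_ovLST hL0 hms hd n) ih

lemma one_add_mul_div_blockP_le_ovLST (hL0 : IsLSTLike L0) (hms : ∀ n, 0 < ms (n + 1))
    (hd : DifferentiableOn ℝ L0 (Ici 0)) {a : ℝ} (ha : HasDerivWithinAt L0 a (Ici 0) 0)
    (ha0 : a ≤ 0) (hconv : ∀ k, ConvexOn ℝ (Ici 0) (ovLST L0 ms k)) (n : ℕ) :
    1 + a * (ms (n + 1) / blockP L0 ms (n + 1)) ≤ ovLST L0 ms n (ms (n + 1)) := by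
  have hms' : ∀ n, 0 ≤ ms (n + 1) := fun n => (hms n).le
  have hslope := (hconv n).le_slope_of_hasDerivWithinAt self_mem_Ici (hms' n) (hms n)
    (hasDerivWithinAt_ovLST_zero hL0 hms' hd ha n)
  rw [slope_def_field, sub_zero, (isLSTLike_ovLST hL0 hms' n).map_zero, le_div_iff₀ (hms n)]
    at hslope
  have hratio : ms (n + 1) / blockP L0 ms n ≤ ms (n + 1) / blockP L0 ms (n + 1) :=
    div_le_div_of_nonneg_left (hms' n) (blockP_pos hL0 hms' (n + 1)) (blockP_succ_le hL0 hms' n)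
  calc 1 + a * (ms (n + 1) / blockP L0 ms (n + 1))
      ≤ 1 + a * (ms (n + 1) / blockP L0 ms n) := by
        gcongr 1 + ?_
        exact mul_le_mul_of_nonpos_left hratio ha0
    _ = 1 + a / blockP L0 ms n * ms (n + 1) := by ring
    _ ≤ ovLST L0 ms n (ms (n + 1)) := by linarith

end Recursion

theorem stmt_10_general
    (ms : ℕ → ℝ)
    (hms : ∀ n, 1 ≤ n → 0 < ms n)
    (L0 : ℝ → ℝ) (hL00 : L0 0 = 1)
    (hL0pos : ∀ s, 0 ≤ s → 0 < L0 s)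
    (hL0anti : StrictAntiOn L0 (Set.Ici 0))
    (lam : ℝ) (hlam : 0 < lam)
    (hdiff : DifferentiableOn ℝ L0 (Set.Ici 0))
    (hder : HasDerivWithinAt L0 (-(1 / lam)) (Set.Ici 0) 0)
    (hconv : ∀ k : ℕ, ConvexOn ℝ (Set.Ici (0 : ℝ)) (ovLST L0 ms k))
    (hratio : Tendsto (fun n => ms (n + 1) / blockP L0 ms (n + 1)) atTop (nhds 0)) :
    Tendsto (fun n => ovLST L0 ms n (ms (n + 1))) atTop (nhds 1) := by
  have hL0 : IsLSTLike L0 := ⟨hL00, hL0pos, hL0anti.antitoneOn⟩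
  have hms' : ∀ n, 0 < ms (n + 1) := fun n => hms (n + 1) (Nat.le_add_left 1 n)
  have hlower : Tendsto (fun n => 1 + -(1 / lam) * (ms (n + 1) / blockP L0 ms (n + 1)))
      atTop (nhds 1) := by
    simpa using (hratio.const_mul (-(1 / lam))).const_add 1
  refine tendsto_of_tendsto_of_tendsto_of_le_of_le hlower tendsto_const_nhds
    (one_add_mul_div_blockP_le_ovLST hL0 hms' hdiff hder (by simp [hlam.le]) hconv) fun n => ?_
  exact (isLSTLike_ovLST hL0 (fun n => (hms' n).le) n).le_one (hms' n).le

theorem stmt_10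
    (μ : ℝ) (hμ : 0 < μ) (ms : ℕ → ℝ)
    (hms : ∀ n, 1 ≤ n → 0 < ms n)
    (hsum : HasSum (fun n => ms (n + 1)) μ)
    (L0 : ℝ → ℝ) (hL00 : L0 0 = 1)
    (hL0pos : ∀ s, 0 ≤ s → 0 < L0 s)
    (hL0anti : StrictAntiOn L0 (Set.Ici 0))
    (hL0lim : Tendsto L0 atTop (nhds 0))
    (lam : ℝ) (hlam : 0 < lam)
    (hdiff : DifferentiableOn ℝ L0 (Set.Ici 0))
    (hder : HasDerivWithinAt L0 (-(1 / lam)) (Set.Ici 0) 0)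
    (hconv : ∀ k : ℕ, ConvexOn ℝ (Set.Ici (0 : ℝ)) (ovLST L0 ms k))
    (hratio : Tendsto (fun n => ms (n + 1) / blockP L0 ms (n + 1)) atTop (nhds 0)) :
    Tendsto (fun n => ovLST L0 ms n (ms (n + 1))) atTop (nhds 1) :=
  stmt_10_general ms hms L0 hL00 hL0pos hL0anti lam hlam hdiff hder hconv hratio
end
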